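/- arXiv:1202.0800 — 2 statements merged into one kernel-verified Lean document; each statement's English description precedes it below -/
import Mathlib

section
/- Let q be a prime power, F_q ⊆ F_{q^N}, and let C ⊆ (F_{q^N})^{kα} be a code such that any two distinct codewords are at rank distance at least δ, where δ ≥ 2tα + 1. Let c ∈ C be a codeword, let e ∈ (F_{q^N})^{tα} be arbitrary (the errors introduced by t adversarial nodes each storing α symbols), and let B be any tα × kα matrix over F_q (the F_q-linear propagation of these errors through node repairs). Then c is the unique codeword of C at rank distance at most tα from the corrupted word c + eB. In particular, the original data can be recovered from any k nodes of the concatenated MRD/MDS-array storage scheme in the presence of up to t statically corrupted nodes. -/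
/-!
Every coordinate of `eB` is an `F_q`-combination of the `tα` coordinates of `e`, so the error
has rank weight at most `tα`. If another codeword `c'` were within rank distance `tα` of
`c + eB`, the triangle inequality for the rank distance would put `c` and `c'` within
`2tα < δ` of each other.
-/

/-- The rank weight of a vector `x ∈ (F_{q^N})^m`: the dimension over `F_q` of the
`F_q`-linear span in `F_{q^N}` of the coordinates of `x`. -/
noncomputable def rankWeight (Fq : Type) [Field Fq] {FqN : Type} [Field FqN]
    [Algebra Fq FqN] {ι : Type} (x : ι → FqN) : ℕ :=
  Module.finrank Fq ↥(Submodule.span Fq (Set.range x))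

section RankWeight

variable (Fq : Type) [Field Fq] {FqN : Type} [Field FqN] [Algebra Fq FqN] {ι : Type}

lemma rankWeight_le_of_span_le {κ : Type} [Finite κ] {x : ι → FqN} {y : κ → FqN}
    (h : Submodule.span Fq (Set.range x) ≤ Submodule.span Fq (Set.range y)) :
    rankWeight Fq x ≤ rankWeight Fq y :=
  have : FiniteDimensional Fq (Submodule.span Fq (Set.range y)) :=
    FiniteDimensional.span_of_finite Fq (Set.finite_range y)
  Submodule.finrank_mono h

lemma rankWeight_le_card [Fintype ι] (x : ι → FqN) : rankWeight Fq x ≤ Fintype.card ι :=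
  finrank_range_le_card x

lemma rankWeight_neg (x : ι → FqN) : rankWeight Fq (-x) = rankWeight Fq x := by
  rw [rankWeight, rankWeight, ← Set.neg_range', Submodule.span_neg]

lemma rankWeight_sub_comm (x y : ι → FqN) :
    rankWeight Fq (x - y) = rankWeight Fq (y - x) := by
  rw [← neg_sub, rankWeight_neg]

lemma rankWeight_add_le [Finite ι] (x y : ι → FqN) :
    rankWeight Fq (x + y) ≤ rankWeight Fq x + rankWeight Fq y := by
  have : FiniteDimensional Fq (Submodule.span Fq (Set.range x)) :=
    FiniteDimensional.span_of_finite Fq (Set.finite_range x)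
  have : FiniteDimensional Fq (Submodule.span Fq (Set.range y)) :=
    FiniteDimensional.span_of_finite Fq (Set.finite_range y)
  have hle : Submodule.span Fq (Set.range (x + y)) ≤
      Submodule.span Fq (Set.range x) ⊔ Submodule.span Fq (Set.range y) := by
    rw [Submodule.span_le]
    rintro _ ⟨i, rfl⟩
    exact Submodule.add_mem _
      (Submodule.mem_sup_left (Submodule.subset_span ⟨i, rfl⟩))
      (Submodule.mem_sup_right (Submodule.subset_span ⟨i, rfl⟩))
  exact (Submodule.finrank_mono hle).trans (Submodule.finrank_add_le_finrank_add_finrank _ _)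

lemma rankWeight_sub_le [Finite ι] (x y z : ι → FqN) :
    rankWeight Fq (x - z) ≤ rankWeight Fq (x - y) + rankWeight Fq (y - z) := by
  simpa using rankWeight_add_le Fq (x - y) (y - z)

lemma rankWeight_vecMul_le {κ : Type} [Fintype κ] (e : κ → FqN) (B : κ → ι → Fq) :
    rankWeight Fq (fun j => ∑ i, e i * algebraMap Fq FqN (B i j)) ≤ rankWeight Fq e := by
  refine rankWeight_le_of_span_le Fq (Submodule.span_le.mpr ?_)
  rintro _ ⟨j, rfl⟩
  refine Submodule.sum_mem _ fun i _ => ?_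
  rw [mul_comm, ← Algebra.smul_def]
  exact Submodule.smul_mem _ _ (Submodule.subset_span ⟨i, rfl⟩)

theorem eq_of_rankWeight_sub_le [Finite ι] {C : Set (ι → FqN)} {δ τ : ℕ}
    (hdist : ∀ c₁ ∈ C, ∀ c₂ ∈ C, c₁ ≠ c₂ → δ ≤ rankWeight Fq (c₁ - c₂)) (hτ : 2 * τ < δ)
    {r c c' : ι → FqN} (hc : c ∈ C) (hc' : c' ∈ C)
    (hr : rankWeight Fq (r - c) ≤ τ) (hr' : rankWeight Fq (r - c') ≤ τ) : c = c' := by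
  by_contra hne
  have hfar := hdist c hc c' hc' hne
  have hnear : rankWeight Fq (c - c') ≤ 2 * τ := calc
    rankWeight Fq (c - c') ≤ rankWeight Fq (c - r) + rankWeight Fq (r - c') :=
      rankWeight_sub_le Fq c r c'
    _ ≤ 2 * τ := by rw [rankWeight_sub_comm]; omega
  omega

end RankWeight

theorem static_error_resilience_of_concatenated_scheme_general
    (Fq FqN : Type) [Field Fq] [Field FqN] [Algebra Fq FqN]
    (k α t δ : ℕ) (C : Set (Fin (k * α) → FqN))
    (hdist : ∀ c₁ ∈ C, ∀ c₂ ∈ C, c₁ ≠ c₂ → δ ≤ rankWeight Fq (c₁ - c₂))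
    (hδ : 2 * t * α + 1 ≤ δ)
    (c : Fin (k * α) → FqN) (hc : c ∈ C)
    (e : Fin (t * α) → FqN) (B : Matrix (Fin (t * α)) (Fin (k * α)) Fq) :
    rankWeight Fq
        (fun j : Fin (k * α) => ∑ i : Fin (t * α), e i * algebraMap Fq FqN (B i j)) ≤
        t * α ∧
      ∀ c' ∈ C,
        rankWeight Fq
            ((fun j : Fin (k * α) =>
              c j + ∑ i : Fin (t * α), e i * algebraMap Fq FqN (B i j)) - c') ≤ t * α →
        c' = c := by
  set err : Fin (k * α) → FqN := fun j => ∑ i, e i * algebraMap Fq FqN (B i j)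
  have herr : rankWeight Fq err ≤ t * α :=
    (rankWeight_vecMul_le Fq e B).trans
      ((rankWeight_le_card Fq e).trans (Fintype.card_fin _).le)
  refine ⟨herr, fun c' hc' hnear => ?_⟩
  have hcorrupt : (fun j => c j + err j) - c = err := by
    funext j
    simp
  refine eq_of_rankWeight_sub_le Fq hdist (by linarith) hc' hc hnear ?_
  rwa [hcorrupt]

/-- In the concatenated MRD/MDS-array storage scheme, let
`C ⊆ (F_{q^N})^{kα}` have minimum rank distance `δ ≥ 2tα + 1`, let `c ∈ C`, let
`e ∈ (F_{q^N})^{tα}` be the errors introduced by `t` adversarial nodes each storing `α`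
symbols, and let `B` be any `tα × kα` matrix over `F_q` describing error propagation.
Then `c` is the unique codeword of `C` at rank distance at most `tα` from the corrupted
word `c + eB`; hence the original data is recoverable from any `k` nodes despite up to
`t` statically corrupted nodes. -/
theorem static_error_resilience_of_concatenated_scheme
    (q N : ℕ) (hq : ∃ p e : ℕ, p.Prime ∧ 0 < e ∧ q = p ^ e)
    (Fq FqN : Type) [Field Fq] [Field FqN] [Algebra Fq FqN]
    [Fintype Fq] [Fintype FqN]
    (hcard : Fintype.card Fq = q) (hcardN : Fintype.card FqN = q ^ N)
    (k α t δ : ℕ) (C : Set (Fin (k * α) → FqN))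
    (hdist : ∀ c₁ ∈ C, ∀ c₂ ∈ C, c₁ ≠ c₂ → δ ≤ rankWeight Fq (c₁ - c₂))
    (hδ : 2 * t * α + 1 ≤ δ)
    (c : Fin (k * α) → FqN) (hc : c ∈ C)
    (e : Fin (t * α) → FqN) (B : Matrix (Fin (t * α)) (Fin (k * α)) Fq) :
    rankWeight Fq
        (fun j : Fin (k * α) => ∑ i : Fin (t * α), e i * algebraMap Fq FqN (B i j)) ≤
        t * α ∧
      ∀ c' ∈ C,
        rankWeight Fq
            ((fun j : Fin (k * α) =>
              c j + ∑ i : Fin (t * α), e i * algebraMap Fq FqN (B i j)) - c') ≤ t * α →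
        c' = c :=
  static_error_resilience_of_concatenated_scheme_general Fq FqN k α t δ C hdist hδ c hc e B
end

section
/- Let q be a prime power, F_q ⊆ F_{q^N}, let r divide m, let r < k ≤ m ≤ N, and let g_1, …, g_m ∈ F_{q^N} be linearly independent over F_q. Partition {1, …, m} into m/r groups G_1, …, G_{m/r} of size r and set p_i = ∑_{l ∈ G_i} g_l and n = m + m/r. Then for every nonzero linearized polynomial f of q-degree at most k − 1, the codeword (f(g_1), …, f(g_m), f(p_1), …, f(p_{m/r})) ∈ (F_{q^N})^n has at most k + ⌈k/r⌉ − 2 zero coordinates; equivalently, its Hamming weight is at least n − k + 2 − ⌈k/r⌉. Hence the locally repairable code C^loc has minimum Hamming distance at least n − k + 2 − ⌈k/r⌉ and attains the locality bound d_min ≤ n − k + 2 − ⌈k/r⌉. -/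
/-!
A linearized polynomial `f` of `q`-degree below `k` is an `F_q`-linear map, and as a nonzero
polynomial of degree at most `q ^ (k - 1)` it has at most `q ^ (k - 1)` roots, so its kernel `W`
has dimension at most `k - 1`. Let `S` be the evaluation points in `W` and `T` the groups whose
parity point lies in `W`. For a group of `T` not contained in `S`, the sum of its points outside `S`
also lies in `W`; these sums together with the points of `S` are sums of a linearly independent
family over pairwise disjoint nonempty blocks, hence linearly independent. So at most `k - 1`
zeros come from `S` and the groups of `T` not inside `S`, while the groups inside `S` number at
most `|S| / r ≤ (k - 1) / r`. In total there are at most `k - 1 + ⌊(k - 1) / r⌋ = k + ⌈k / r⌉ - 2`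
zero coordinates.
-/

open Polynomial Module Finset Function

section Linearized

variable (K : Type*) {L : Type*} [Field K] [Fintype K] [Field L] {k : ℕ}

noncomputable def linearizedPolynomial (a : Fin k → L) : L[X] :=
  ∑ i, C (a i) * X ^ Fintype.card K ^ (i : ℕ)

variable {K}

theorem linearizedPolynomial_ne_zero {a : Fin k → L} (ha : a ≠ 0) :
    linearizedPolynomial K a ≠ 0 := by
  obtain ⟨i₀, hi₀⟩ := Function.ne_iff.mp ha
  have hinj : Injective fun i : Fin k => Fintype.card K ^ (i : ℕ) :=
    (Nat.pow_right_injective Fintype.one_lt_card).comp Fin.val_injective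
  intro h
  apply hi₀
  simpa [linearizedPolynomial, finsetSum_coeff, coeff_C_mul_X_pow, hinj.eq_iff] using
    congrArg (coeff · (Fintype.card K ^ (i₀ : ℕ))) h

theorem natDegree_linearizedPolynomial_le (a : Fin k → L) :
    (linearizedPolynomial K a).natDegree ≤ Fintype.card K ^ (k - 1) :=
  natDegree_sum_le_of_forall_le _ _ fun i _ => (natDegree_C_mul_X_pow_le _ _).trans <|
    Nat.pow_le_pow_right Fintype.card_pos (by omega)

variable (K) [Algebra K L]

noncomputable def linearizedMap (a : Fin k → L) : L →ₗ[K] L :=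
  ∑ i, a i • ((FiniteField.frobeniusAlgHom K L) ^ (i : ℕ)).toLinearMap

variable {K}

theorem linearizedMap_apply (a : Fin k → L) (x : L) :
    linearizedMap K a x = ∑ i, a i * x ^ Fintype.card K ^ (i : ℕ) := by
  simp [linearizedMap, AlgHom.coe_pow, FiniteField.coe_frobeniusAlgHom, pow_iterate]

theorem isRoot_linearizedPolynomial_iff {a : Fin k → L} {x : L} :
    (linearizedPolynomial K a).IsRoot x ↔ x ∈ LinearMap.ker (linearizedMap K a) := by
  simp [linearizedPolynomial, linearizedMap_apply, eval_finsetSum]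

variable (K)

theorem finite_ker_linearizedMap {a : Fin k → L} (ha : a ≠ 0) :
    Finite (LinearMap.ker (linearizedMap K a)) :=
  ((finite_setOfPred_isRoot (linearizedPolynomial_ne_zero ha)).subset
    fun _ hx => isRoot_linearizedPolynomial_iff.mpr hx).to_subtype

theorem finrank_ker_linearizedMap_le {a : Fin k → L} (ha : a ≠ 0) :
    finrank K (LinearMap.ker (linearizedMap K a)) ≤ k - 1 := by
  classical
  have := finite_ker_linearizedMap K ha
  have := Fintype.ofFinite (LinearMap.ker (linearizedMap K a))
  refine (Nat.pow_le_pow_iff_right (Fintype.one_lt_card (α := K))).mp ?_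
  calc Fintype.card K ^ finrank K (LinearMap.ker (linearizedMap K a))
      = Fintype.card (LinearMap.ker (linearizedMap K a)) := card_eq_pow_finrank.symm
    _ ≤ #(linearizedPolynomial K a).roots.toFinset := by
      rw [← Fintype.card_coe]
      refine Fintype.card_le_of_injective (fun x => ⟨x, ?_⟩)
        fun x y h => Subtype.ext (congrArg Subtype.val h :)
      rw [Multiset.mem_toFinset, mem_roots (linearizedPolynomial_ne_zero ha)]
      exact isRoot_linearizedPolynomial_iff.mpr x.2
    _ ≤ (linearizedPolynomial K a).natDegree :=
      (Multiset.toFinset_card_le _).trans (card_roots' _)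
    _ ≤ Fintype.card K ^ (k - 1) := natDegree_linearizedPolynomial_le a

end Linearized

section GroupSums

variable {K V ι κ : Type*} [Field K] [AddCommGroup V] [Module K V] [Fintype ι] {g : ι → V}

theorem LinearIndependent.sum_of_pairwiseDisjoint [Fintype κ] (hg : LinearIndependent K g)
    {B : κ → Finset ι} (hB : Pairwise (Disjoint on B)) (hne : ∀ j, (B j).Nonempty) :
    LinearIndependent K fun j => ∑ l ∈ B j, g l := by
  classical
  rw [Fintype.linearIndependent_iff] at hg ⊢
  intro c hc j
  obtain ⟨l, hl⟩ := hne j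
  have hcoeff := hg (fun l => ∑ j, if l ∈ B j then c j else 0) (by
    simp_rw [sum_smul, ite_smul, zero_smul]
    rw [sum_comm]
    simpa [smul_sum, sum_ite_mem] using hc) l
  rwa [sum_eq_single j (fun j' _ hj' => if_neg (disjoint_left.mp (hB hj'.symm) hl))
    (by simp), if_pos hl] at hcoeff

theorem card_add_card_le_finrank_of_not_subset (hg : LinearIndependent K g) {G : κ → Finset ι}
    (hG : Pairwise (Disjoint on G)) (W : Submodule K V) [FiniteDimensional K W]
    {S : Finset ι} (hS : ∀ l ∈ S, g l ∈ W) {T : Finset κ} (hT : ∀ i ∈ T, ∑ l ∈ G i, g l ∈ W)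
    (hTS : ∀ i ∈ T, ¬ G i ⊆ S) : #S + #T ≤ finrank K W := by
  classical
  set B : S ⊕ T → Finset ι := Sum.elim (fun l => {l.1}) (fun i => G i \ S)
  have hB : Pairwise (Disjoint on B) := by
    rintro (l | i) (l' | i') h <;> simp only [onFun, B, Sum.elim_inl, Sum.elim_inr]
    · exact disjoint_singleton.mpr fun e => h (congrArg Sum.inl (Subtype.ext e))
    · exact disjoint_singleton_left.mpr fun hl => (mem_sdiff.mp hl).2 l.2
    · exact disjoint_singleton_right.mpr fun hl => (mem_sdiff.mp hl).2 l'.2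
    · exact (hG fun h' => h (congrArg Sum.inr (Subtype.ext h'))).mono sdiff_le sdiff_le
  have hne : ∀ j, (B j).Nonempty := by
    rintro (l | i)
    · exact singleton_nonempty _
    · exact sdiff_nonempty.mpr (hTS i i.2)
  have hmem : ∀ j, ∑ l ∈ B j, g l ∈ W := by
    rintro (l | i)
    · simpa [B] using hS l l.2
    · have hinter : ∑ l ∈ G i ∩ S, g l ∈ W := W.sum_mem fun l hl => hS l (mem_inter.mp hl).2
      have := W.sub_mem (hT i i.2) hinter
      rwa [← sum_sdiff_eq_sub inter_subset_left, sdiff_inter_self_left] at this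
  calc #S + #T = Fintype.card (S ⊕ T) := by simp
    _ = finrank K (Submodule.span K (Set.range fun j => ∑ l ∈ B j, g l)) :=
      (finrank_span_eq_card (hg.sum_of_pairwiseDisjoint hB hne)).symm
    _ ≤ finrank K W :=
      Submodule.finrank_mono (Submodule.span_le.mpr (Set.range_subset_iff.mpr hmem))

theorem natCard_mem_add_natCard_sum_mem_le [Fintype κ] (hg : LinearIndependent K g) {G : κ → Finset ι}
    (hG : Pairwise (Disjoint on G)) {r : ℕ} (hr : 0 < r) (hGcard : ∀ i, r ≤ #(G i))
    (W : Submodule K V) [FiniteDimensional K W] :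
    Nat.card {l // g l ∈ W} + Nat.card {i // ∑ l ∈ G i, g l ∈ W} ≤
      finrank K W + finrank K W / r := by
  classical
  set S := univ.filter (g · ∈ W)
  set T := univ.filter fun i => ∑ l ∈ G i, g l ∈ W
  have hST : #S + #(T.filter fun i => ¬ G i ⊆ S) ≤ finrank K W :=
    card_add_card_le_finrank_of_not_subset hg hG W (fun _ hl => (mem_filter.mp hl).2)
      (fun _ hi => (mem_filter.mp (mem_filter.mp hi).1).2) (fun _ hi => (mem_filter.mp hi).2)
  have hfull : #(T.filter fun i => G i ⊆ S) * r ≤ #S := calc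
    _ ≤ ∑ i ∈ T.filter fun i => G i ⊆ S, #(G i) := by
      rw [← smul_eq_mul]; exact card_nsmul_le_sum _ _ _ fun i _ => hGcard i
    _ = #((T.filter fun i => G i ⊆ S).biUnion G) := (card_biUnion fun i _ j _ h => hG h).symm
    _ ≤ #S := card_le_card (biUnion_subset.mpr fun i hi => (mem_filter.mp hi).2)
  have hsplit := card_filter_add_card_filter_not (s := T) fun i => G i ⊆ S
  have hdiv := (Nat.le_div_iff_mul_le hr).mpr (hfull.trans (by omega : #S ≤ finrank K W))
  have hcardS : Nat.card {l // g l ∈ W} = #S := by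
    rw [Nat.card_eq_fintype_card, Fintype.card_subtype]
  have hcardT : Nat.card {i // ∑ l ∈ G i, g l ∈ W} = #T := by
    rw [Nat.card_eq_fintype_card, Fintype.card_subtype]
  omega

end GroupSums

theorem locally_repairable_code_optimal_distance_divisible_case_general
    (q m r k : ℕ)
    (hr : 0 < r) (hkm : k ≤ m)
    (Fq FqN : Type) [Field Fq] [Field FqN] [Algebra Fq FqN]
    [Fintype Fq]
    (hcard : Fintype.card Fq = q)
    (g : Fin m → FqN) (hg : LinearIndependent Fq g)
    (G : Fin (m / r) → Finset (Fin m))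
    (hGcard : ∀ i, (G i).card = r)
    (hdisj : ∀ i j : Fin (m / r), i ≠ j → Disjoint (G i) (G j))
    (a : Fin k → FqN) (ha : a ≠ 0)
    (c : (Fin m ⊕ Fin (m / r)) → FqN)
    (hc : c = Sum.elim (fun l : Fin m => ∑ i : Fin k, a i * g l ^ q ^ (i : ℕ))
      (fun i' : Fin (m / r) => ∑ i : Fin k, a i * (∑ l ∈ G i', g l) ^ q ^ (i : ℕ))) :
    Nat.card {x : Fin m ⊕ Fin (m / r) // c x = 0} ≤ k + (k + r - 1) / r - 2 ∧
      (m + m / r) - k + 2 - (k + r - 1) / r ≤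
        Nat.card {x : Fin m ⊕ Fin (m / r) // c x ≠ 0} := by
  classical
  subst hcard
  set W := LinearMap.ker (linearizedMap Fq a)
  have : Finite W := finite_ker_linearizedMap Fq ha
  have hk : k ≠ 0 := by rintro rfl; exact ha (Subsingleton.elim _ _)
  have hzeros : Nat.card {x // c x = 0} =
      Nat.card {l // g l ∈ W} + Nat.card {i // ∑ l ∈ G i, g l ∈ W} := by
    rw [Nat.card_congr Equiv.subtypeSum, Nat.card_sum]
    simp only [hc, W, LinearMap.mem_ker, linearizedMap_apply, Sum.elim_inl, Sum.elim_inr]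
  have hsplit : Nat.card {x // c x = 0} + Nat.card {x // c x ≠ 0} = m + m / r := by
    rw [← Nat.card_sum, Nat.card_congr (Equiv.sumCompl _)]
    simp
  have hcount := natCard_mem_add_natCard_sum_mem_le hg hdisj hr (fun i => (hGcard i).ge) W
  have hW : finrank Fq W ≤ k - 1 := finrank_ker_linearizedMap_le Fq ha
  have hzeros_le : Nat.card {x // c x = 0} ≤ k - 1 + (k - 1) / r :=
    hzeros ▸ hcount.trans (add_le_add hW (Nat.div_le_div_right hW))
  have hceil : (k + r - 1) / r = (k - 1) / r + 1 := by
    rw [show k + r - 1 = k - 1 + r by omega, Nat.add_div_right _ hr]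
  have hkn : k ≤ m + m / r := hkm.trans (Nat.le_add_right _ _)
  rw [hceil]
  generalize m + m / r = n at hsplit hkn ⊢
  constructor <;> omega

/-- Minimum distance of the locally repairable code `C^loc` (case `r ∣ m`).
With `r ∣ m`, `r < k ≤ m ≤ N`, `F_q`-linearly independent evaluation points
`g_1, …, g_m ∈ F_{q^N}`, groups `G_1, …, G_{m/r}` of size `r` partitioning `{1, …, m}`, and
parity points `p_i = ∑_{l ∈ G_i} g_l`, every codeword of a nonzero linearized polynomial `f`
of q-degree at most `k - 1` has at most `k + ⌈k/r⌉ - 2` zero coordinates; equivalently its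
Hamming weight is at least `n - k + 2 - ⌈k/r⌉` where `n = m + m/r`. Hence `C^loc` attains
the locality bound `d_min ≤ n - k + 2 - ⌈k/r⌉`. (Here `⌈k/r⌉ = (k + r - 1) / r`.) -/
theorem locally_repairable_code_optimal_distance_divisible_case
    (q N m r k : ℕ) (hq : ∃ p e : ℕ, p.Prime ∧ 0 < e ∧ q = p ^ e)
    (hr : 0 < r) (hrm : r ∣ m) (hrk : r < k) (hkm : k ≤ m) (hmN : m ≤ N)
    (Fq FqN : Type) [Field Fq] [Field FqN] [Algebra Fq FqN]
    [Fintype Fq] [Fintype FqN]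
    (hcard : Fintype.card Fq = q) (hcardN : Fintype.card FqN = q ^ N)
    (g : Fin m → FqN) (hg : LinearIndependent Fq g)
    (G : Fin (m / r) → Finset (Fin m))
    (hGcard : ∀ i, (G i).card = r)
    (hdisj : ∀ i j : Fin (m / r), i ≠ j → Disjoint (G i) (G j))
    (hcover : Finset.univ.biUnion G = (Finset.univ : Finset (Fin m)))
    (a : Fin k → FqN) (ha : a ≠ 0)
    (c : (Fin m ⊕ Fin (m / r)) → FqN)
    (hc : c = Sum.elim (fun l : Fin m => ∑ i : Fin k, a i * g l ^ q ^ (i : ℕ))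
      (fun i' : Fin (m / r) => ∑ i : Fin k, a i * (∑ l ∈ G i', g l) ^ q ^ (i : ℕ))) :
    Nat.card {x : Fin m ⊕ Fin (m / r) // c x = 0} ≤ k + (k + r - 1) / r - 2 ∧
      (m + m / r) - k + 2 - (k + r - 1) / r ≤
        Nat.card {x : Fin m ⊕ Fin (m / r) // c x ≠ 0} :=
  locally_repairable_code_optimal_distance_divisible_case_general q m r k hr hkm Fq FqN hcard g hg G
    hGcard hdisj a ha c hc
end
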